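/- arXiv:math/0510392 — 2 statements merged into one kernel-verified Lean document; each statement's English description precedes it below -/
import Mathlib

section
/- Let $Y$ be a random variable with values in the positive integers, let $p \geq 1$ be real, and suppose $E(Y^{p+1}) < \infty$. Let $S_0 = 0$, $S_n = Y_1 + \cdots + Y_n$ be the renewal process of i.i.d. copies of $Y$, and for $x \geq 1$ let $B_x = \min\{m \geq 0 : x + m \in \{S_n : n \geq 0\}\}$ be the forward recurrence time at $x$. Then there is a constant $C$ (independent of $x$ and depending only on $p$) such that $E(B_x^p) \leq C\, E(Y^{p+1})$ for all $x \geq 1$. -/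
/-!
Almost surely every `Y i ≥ 1`, so the partial sums `S n` increase strictly. If `n` is the last
index with `S n < x`, the renewal epoch `S (n + 1) = S n + Y n` is `≥ x`, hence
`B x ≤ S n + Y n - x`. Summing over all pairs `(n, j)` with `S n = j < x` bounds `f (B x)`
pointwise for monotone `f`. Since `S n` is independent of `Y n` and each level `j` is hit by at
most one `S n`, taking expectations gives `E f (B x) ≤ ∑_{j < x} E f (j + Y - x)`, and at most `Y`
of these truncated differences are nonzero, so this is `≤ E (Y f Y)`. For `f k = k ^ p` this is
the bound with `C = 1`.
-/

open MeasureTheory ProbabilityTheory Finset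
open scoped ENNReal

section Deterministic

variable {y : ℕ → ℕ}

lemma strictMono_sum_range_of_one_le (hy : ∀ i, 1 ≤ y i) :
    StrictMono fun n => ∑ i ∈ range n, y i :=
  strictMono_nat_of_lt_succ fun n => by
    rw [sum_range_succ]
    have := hy n
    omega

lemma exists_sum_range_lt_le_sum_range_succ (hy : ∀ i, 1 ≤ y i) {x : ℕ} (hx : 1 ≤ x) :
    ∃ n, ∑ i ∈ range n, y i < x ∧ x ≤ ∑ i ∈ range (n + 1), y i := by
  by_contra! h
  have hbelow : ∀ n, ∑ i ∈ range n, y i < x := fun n =>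
    Nat.rec (by simp; omega) (fun n ih => h n ih) n
  exact (hbelow x).not_ge ((strictMono_sum_range_of_one_le hy).id_le x)

lemma comp_sInf_le_sum_tsum_ite {f : ℕ → ℝ≥0∞} (hf : Monotone f) (hy : ∀ i, 1 ≤ y i)
    {x : ℕ} (hx : 1 ≤ x) :
    f (sInf {m | ∃ n, ∑ i ∈ range n, y i = x + m})
      ≤ ∑ j ∈ range x, ∑' n, if ∑ i ∈ range n, y i = j then f (j + y n - x) else 0 := by
  obtain ⟨n, hlt, hle⟩ := exists_sum_range_lt_le_sum_range_succ hy hx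
  have hB : sInf {m | ∃ n, ∑ i ∈ range n, y i = x + m} ≤ ∑ i ∈ range n, y i + y n - x := by
    rw [← sum_range_succ]
    exact Nat.sInf_le ⟨n + 1, by omega⟩
  calc f (sInf {m | ∃ n, ∑ i ∈ range n, y i = x + m})
      ≤ f (∑ i ∈ range n, y i + y n - x) := hf hB
    _ ≤ ∑' n', if ∑ i ∈ range n', y i = ∑ i ∈ range n, y i
          then f (∑ i ∈ range n, y i + y n' - x) else 0 :=
        (if_pos rfl).symm.trans_le (ENNReal.le_tsum n)
    _ ≤ _ := single_le_sum (f := fun j => ∑' n, if ∑ i ∈ range n, y i = j then f (j + y n - x)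
          else 0) (fun _ _ => by positivity) (mem_range.2 hlt)

end Deterministic

lemma sum_range_comp_add_sub_le {M : Type*} [AddCommMonoid M] [PartialOrder M]
    [IsOrderedAddMonoid M] {f : ℕ → M} (hf : Monotone f) (hf0 : f 0 = 0) (x y : ℕ) :
    ∑ j ∈ range x, f (j + y - x) ≤ y • f y := by
  calc ∑ j ∈ range x, f (j + y - x) = ∑ j ∈ range x with x - y ≤ j, f (j + y - x) := by
        refine (sum_filter_of_ne fun j _ hj => ?_).symm
        by_contra hlt
        exact hj (by rw [show j + y - x = 0 by omega, hf0])
    _ ≤ #{j ∈ range x | x - y ≤ j} • f y :=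
        sum_le_card_nsmul _ _ _ fun j hj => hf (by simp at hj; omega)
    _ ≤ y • f y := by
        refine nsmul_le_nsmul_left (hf0 ▸ hf (Nat.zero_le y)) ?_
        calc #{j ∈ range x | x - y ≤ j} ≤ #(Ico (x - y) x) :=
              card_le_card fun j hj => by simp at hj ⊢; omega
          _ ≤ y := by simp; omega

section Renewal

variable {Ω : Type*} [MeasurableSpace Ω] {μ : Measure Ω} {Y : ℕ → Ω → ℕ}

lemma measurable_sum_range (hmeas : ∀ i, Measurable (Y i)) (n : ℕ) :
    Measurable fun ω => ∑ i ∈ range n, Y i ω :=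
  Finset.measurable_sum _ fun i _ => hmeas i

lemma measurableSet_sum_range_eq (hmeas : ∀ i, Measurable (Y i)) (n j : ℕ) :
    MeasurableSet {ω | ∑ i ∈ range n, Y i ω = j} :=
  measurable_sum_range hmeas n (measurableSet_singleton j)

lemma tsum_measure_sum_range_eq_le_one [IsProbabilityMeasure μ] (hmeas : ∀ i, Measurable (Y i))
    (hpos : ∀ i, ∀ᵐ ω ∂μ, 1 ≤ Y i ω) (j : ℕ) :
    ∑' n, μ {ω | ∑ i ∈ range n, Y i ω = j} ≤ 1 := by
  refine (tsum_meas_le_meas_iUnion_of_disjoint₀ μ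
    (fun n => (measurableSet_sum_range_eq hmeas n j).nullMeasurableSet)
    fun n n' hne => ?_).trans prob_le_one
  have hmono : ∀ᵐ ω ∂μ, StrictMono fun n => ∑ i ∈ range n, Y i ω :=
    (ae_all_iff.2 hpos).mono fun ω hω => strictMono_sum_range_of_one_le hω
  refine measure_mono_null (fun ω hω => ?_) (ae_iff.1 hmono)
  exact fun h => hne (h.injective (hω.1.trans hω.2.symm))

lemma lintegral_indicator_sum_range_eq_mul (hmeas : ∀ i, Measurable (Y i))
    (hindep : iIndepFun Y μ) (hident : ∀ i, IdentDistrib (Y i) (Y 0) μ μ)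
    (g : ℕ → ℝ≥0∞) (n j : ℕ) :
    ∫⁻ ω, {ω | ∑ i ∈ range n, Y i ω = j}.indicator (fun ω => g (Y n ω)) ω ∂μ
      = μ {ω | ∑ i ∈ range n, Y i ω = j} * ∫⁻ ω, g (Y 0 ω) ∂μ := by
  have hind : IndepFun (fun ω => ∑ i ∈ range n, Y i ω) (Y n) μ := by
    simpa [Finset.sum_fn] using hindep.indepFun_sum_range_succ hmeas n
  have hind' : IndepFun (fun ω => ({j} : Set ℕ).indicator 1 (∑ i ∈ range n, Y i ω))
      (fun ω => g (Y n ω)) μ :=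
    hind.comp (φ := ({j} : Set ℕ).indicator (1 : ℕ → ℝ≥0∞)) (ψ := g)
      measurable_from_nat measurable_from_nat
  calc ∫⁻ ω, {ω | ∑ i ∈ range n, Y i ω = j}.indicator (fun ω => g (Y n ω)) ω ∂μ
      = ∫⁻ ω, ({j} : Set ℕ).indicator 1 (∑ i ∈ range n, Y i ω) * g (Y n ω) ∂μ := by
        congr with ω
        simp [Set.indicator_apply]
    _ = (∫⁻ ω, ({j} : Set ℕ).indicator 1 (∑ i ∈ range n, Y i ω) ∂μ) * ∫⁻ ω, g (Y n ω) ∂μ :=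
        lintegral_mul_eq_lintegral_mul_lintegral_of_indepFun''
          ((measurable_from_nat (f := ({j} : Set ℕ).indicator (1 : ℕ → ℝ≥0∞))).comp
            (measurable_sum_range hmeas n)).aemeasurable
          ((measurable_from_nat (f := g)).comp (hmeas n)).aemeasurable hind'
    _ = μ {ω | ∑ i ∈ range n, Y i ω = j} * ∫⁻ ω, g (Y 0 ω) ∂μ := by
        congr 1
        · rw [← lintegral_indicator_one (measurableSet_sum_range_eq hmeas n j)]
          congr with ω
        · exact ((hident n).comp measurable_from_nat).lintegral_eq

theorem lintegral_comp_overshoot_le [IsProbabilityMeasure μ] (hmeas : ∀ i, Measurable (Y i))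
    (hindep : iIndepFun Y μ) (hident : ∀ i, IdentDistrib (Y i) (Y 0) μ μ)
    (hpos : ∀ i, ∀ᵐ ω ∂μ, 1 ≤ Y i ω) {f : ℕ → ℝ≥0∞} (hf : Monotone f) (hf0 : f 0 = 0)
    {x : ℕ} (hx : 1 ≤ x) :
    ∫⁻ ω, f (sInf {m | ∃ n, ∑ i ∈ range n, Y i ω = x + m}) ∂μ
      ≤ ∫⁻ ω, Y 0 ω * f (Y 0 ω) ∂μ := by
  have hpos_all : ∀ᵐ ω ∂μ, ∀ i, 1 ≤ Y i ω := ae_all_iff.2 hpos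
  have hterm (j n : ℕ) :
      Measurable ({ω | ∑ i ∈ range n, Y i ω = j}.indicator fun ω => f (j + Y n ω - x)) :=
    ((measurable_from_nat (f := fun k => f (j + k - x))).comp (hmeas n)).indicator
      (measurableSet_sum_range_eq hmeas n j)
  calc ∫⁻ ω, f (sInf {m | ∃ n, ∑ i ∈ range n, Y i ω = x + m}) ∂μ
      ≤ ∫⁻ ω, ∑ j ∈ range x, ∑' n,
          {ω | ∑ i ∈ range n, Y i ω = j}.indicator (fun ω => f (j + Y n ω - x)) ω ∂μ :=
        lintegral_mono_ae <| hpos_all.mono fun ω hω => by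
          simpa only [Set.indicator_apply, Set.mem_ofPred_eq] using
            comp_sInf_le_sum_tsum_ite hf hω hx
    _ = ∑ j ∈ range x, ∑' n,
          μ {ω | ∑ i ∈ range n, Y i ω = j} * ∫⁻ ω, f (j + Y 0 ω - x) ∂μ := by
        rw [lintegral_finsetSum' _ fun j _ =>
          (Measurable.tsum fun n => hterm j n).aemeasurable]
        refine sum_congr rfl fun j _ => ?_
        rw [lintegral_tsum fun n => (hterm j n).aemeasurable]
        exact tsum_congr fun n => lintegral_indicator_sum_range_eq_mul hmeas hindep hident
          (fun k => f (j + k - x)) n j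
    _ ≤ ∑ j ∈ range x, ∫⁻ ω, f (j + Y 0 ω - x) ∂μ := by
        gcongr with j
        rw [ENNReal.tsum_mul_right]
        exact mul_le_of_le_one_left' (tsum_measure_sum_range_eq_le_one hmeas hpos j)
    _ = ∫⁻ ω, ∑ j ∈ range x, f (j + Y 0 ω - x) ∂μ :=
        (lintegral_finsetSum _ fun j _ =>
          (measurable_from_nat (f := fun k => f (j + k - x))).comp (hmeas 0)).symm
    _ ≤ ∫⁻ ω, Y 0 ω * f (Y 0 ω) ∂μ := lintegral_mono fun ω => by
        simpa only [nsmul_eq_mul] using sum_range_comp_add_sub_le hf hf0 x (Y 0 ω)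

end Renewal

theorem stmt_0_general
    {Ω : Type*} [MeasurableSpace Ω] (μ : Measure Ω) [IsProbabilityMeasure μ]
    (Y : ℕ → Ω → ℕ) (hmeas : ∀ i, Measurable (Y i))
    (hindep : iIndepFun Y μ)
    (hident : ∀ i, IdentDistrib (Y i) (Y 0) μ μ)
    (hpos : ∀ i, ∀ᵐ ω ∂μ, 1 ≤ Y i ω)
    (p : ℝ) (hp : 1 ≤ p)
    (S : ℕ → Ω → ℕ) (hS : ∀ n ω, S n ω = ∑ i ∈ Finset.range n, Y i ω)
    (B : ℕ → Ω → ℕ)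
    (hB : ∀ x ω, B x ω = sInf {m : ℕ | ∃ n, S n ω = x + m}) :
    ∃ C : ℝ≥0∞, C ≠ ⊤ ∧ ∀ x : ℕ, 1 ≤ x →
      ∫⁻ ω, ENNReal.ofReal ((B x ω : ℝ) ^ p) ∂μ
        ≤ C * ∫⁻ ω, ENNReal.ofReal ((Y 0 ω : ℝ) ^ (p + 1)) ∂μ := by
  obtain rfl : S = fun n ω => ∑ i ∈ range n, Y i ω := funext₂ hS
  obtain rfl : B = fun x ω => sInf {m : ℕ | ∃ n, ∑ i ∈ range n, Y i ω = x + m} := funext₂ hB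
  have hp0 : 0 < p := one_pos.trans_le hp
  have hmono : Monotone fun k : ℕ => ENNReal.ofReal ((k : ℝ) ^ p) := fun a b hab =>
    ENNReal.ofReal_le_ofReal (Real.rpow_le_rpow (by positivity) (by exact_mod_cast hab) hp0.le)
  have hpow (k : ℕ) : (k : ℝ≥0∞) * ENNReal.ofReal ((k : ℝ) ^ p)
      = ENNReal.ofReal ((k : ℝ) ^ (p + 1)) := by
    rw [Real.rpow_add_one' k.cast_nonneg (by linarith), mul_comm, ENNReal.ofReal_mul
      (by positivity), ENNReal.ofReal_natCast]
  refine ⟨1, ENNReal.one_ne_top, fun x hx => ?_⟩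
  simpa only [one_mul, hpow] using lintegral_comp_overshoot_le hmeas hindep hident hpos hmono
    (by simp [Real.zero_rpow hp0.ne']) hx

/-- uniform moment bound for the forward recurrence time (overshoot)
of a renewal process of i.i.d. positive-integer-valued random variables:
`E(B_x^p) ≤ C E(Y^{p+1})` uniformly in `x ≥ 1`. -/
theorem stmt_0
    {Ω : Type*} [MeasurableSpace Ω] (μ : Measure Ω) [IsProbabilityMeasure μ]
    (Y : ℕ → Ω → ℕ) (hmeas : ∀ i, Measurable (Y i))
    (hindep : iIndepFun Y μ)
    (hident : ∀ i, IdentDistrib (Y i) (Y 0) μ μ)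
    (hpos : ∀ i, ∀ᵐ ω ∂μ, 1 ≤ Y i ω)
    (p : ℝ) (hp : 1 ≤ p)
    (hmom : ∫⁻ ω, ENNReal.ofReal ((Y 0 ω : ℝ) ^ (p + 1)) ∂μ ≠ ⊤)
    (S : ℕ → Ω → ℕ) (hS : ∀ n ω, S n ω = ∑ i ∈ Finset.range n, Y i ω)
    (B : ℕ → Ω → ℕ)
    (hB : ∀ x ω, B x ω = sInf {m : ℕ | ∃ n, S n ω = x + m}) :
    ∃ C : ℝ≥0∞, C ≠ ⊤ ∧ ∀ x : ℕ, 1 ≤ x →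
      ∫⁻ ω, ENNReal.ofReal ((B x ω : ℝ) ^ p) ∂μ
        ≤ C * ∫⁻ ω, ENNReal.ofReal ((Y 0 ω : ℝ) ^ (p + 1)) ∂μ :=
  stmt_0_general μ Y hmeas hindep hident hpos p hp S hS B hB
end

section
/- Consider the one-dimensional totally asymmetric walk ($X_{n+1} \geq X_n$, i.i.d. environment, non-nestling, moment bound with $p>1$). The function $\Delta(\omega) = \sum_{i\geq 0} a_i(\omega)g(T_i\omega)$, where $g = D - v$ is the centered drift and $a_i(\omega) = (1-\pi_{ii}(\omega))^{-1}(P_0^\omega(V_i) - P_1^\omega(V_i))$, satisfies the coefficient bound $|a_i(\omega)| \leq (M/\delta)^{p/(p-1)}\, P_{0,1}^\omega(L > i)$, where $L$ is the first common point of two independent walks in the same environment started at $0$ and $1$. -/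
open MeasureTheory
open scoped ENNReal

/-!
Hölder's inequality, applied to the drift `δ ≤ ∑ (y - x) π x y` with the weights split as
`|y - x| π^{1/p}` times `1_{y ≠ x} π^{1/q}`, together with the moment bound `M^p` gives
`δ ≤ M (1 - π x x)^{1/q}`, i.e. `(1 - π x x)⁻¹ ≤ (M/δ)^q` for `q = p/(p-1)`.

For the probabilities, run the walks from `0` and `1` independently. Their paths are a.s.
nondecreasing, so on the event that they share a point `≤ i` both can be cut at their first visits
to the least common point `ℓ`; the pieces are indexed by the countably many pairs of prefixes. On
each piece neither walk has visited `i` before the cut, and by the Markov property at the cutting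
times both visit `i` afterwards with the same probability `P_ℓ(V_i)`. Hence `|P₀(V_i) - P₁(V_i)|`
is at most the probability that the walks have no common point `≤ i`.
-/

namespace AsymmetricWalk

theorem tsum_drift_le_mul_rpow {w : ℤ → ℝ} {x : ℤ} {p q : ℝ} (hpq : p.HolderConjugate q)
    (hw : ∀ y, 0 ≤ w y) (hw_summable : Summable w) (hforb : ∀ y < x, w y = 0)
    (hmomSummable : Summable fun y : ℤ => |((y - x : ℤ) : ℝ)| ^ p * w y) :
    ∑' y : ℤ, ((y - x : ℤ) : ℝ) * w y ≤
      (∑' y : ℤ, |((y - x : ℤ) : ℝ)| ^ p * w y) ^ (1 / p) * (∑' y, w y - w x) ^ (1 / q) := by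
  classical
  set F : ℤ → ℝ := fun y => |((y - x : ℤ) : ℝ)| * w y ^ (1 / p)
  set G : ℤ → ℝ := fun y => if y = x then 0 else w y ^ (1 / q)
  have hFp : ∀ y, F y ^ p = |((y - x : ℤ) : ℝ)| ^ p * w y := fun y => by
    rw [Real.mul_rpow (abs_nonneg _) (Real.rpow_nonneg (hw y) _), ← Real.rpow_mul (hw y),
      one_div_mul_cancel hpq.ne_zero, Real.rpow_one]
  have hGq : ∀ y, G y ^ q = if y = x then 0 else w y := fun y => by
    by_cases hyx : y = x
    · simp [G, hyx, Real.zero_rpow hpq.symm.ne_zero]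
    · simp only [G, hyx, if_false]
      rw [← Real.rpow_mul (hw y), one_div_mul_cancel hpq.symm.ne_zero, Real.rpow_one]
  have hFG : ∀ y, ((y - x : ℤ) : ℝ) * w y = F y * G y := fun y => by
    rcases lt_trichotomy y x with hyx | rfl | hyx
    · simp [F, G, hforb y hyx, hyx.ne, Real.zero_rpow (inv_ne_zero hpq.ne_zero)]
    · simp [F, G]
    · have hsplit : w y = w y ^ (1 / p) * w y ^ (1 / q) := by
        rw [← Real.rpow_add' (hw y) (by rw [hpq.one_div_add_one_div]; norm_num),
          hpq.one_div_add_one_div, div_one, Real.rpow_one]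
      simp only [F, G, hyx.ne', if_false]
      rw [abs_of_nonneg (by exact_mod_cast (sub_pos.2 hyx).le), mul_assoc, ← hsplit]
  have hG_sum : ∑' y, G y ^ q = ∑' y, w y - w x := by
    rw [tsum_congr hGq]
    linarith [hw_summable.tsum_eq_add_tsum_ite x]
  rw [tsum_congr hFG, ← tsum_congr hFp, ← hG_sum]
  refine Real.inner_le_Lp_mul_Lq_tsum_of_nonneg hpq (fun y => by positivity [hw y])
    (fun y => by positivity [hw y]) (by simpa only [hFp] using hmomSummable) ?_
  simp only [hGq]
  exact hw_summable.of_nonneg_of_le (fun y => by split_ifs <;> simp [hw y])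
    (fun y => by split_ifs <;> simp [hw y])

theorem rpow_le_one_sub_of_drift_of_moment {w : ℤ → ℝ} {x : ℤ} {δ M p : ℝ}
    (hδ : 0 ≤ δ) (hM : 0 < M) (hp : 1 < p) (hw : ∀ y, 0 ≤ w y) (hsum : ∑' y, w y = 1)
    (hforb : ∀ y < x, w y = 0) (hdrift : δ ≤ ∑' y : ℤ, ((y - x : ℤ) : ℝ) * w y)
    (hmomSummable : Summable fun y : ℤ => |((y - x : ℤ) : ℝ)| ^ p * w y)
    (hmom : ∑' y : ℤ, |((y - x : ℤ) : ℝ)| ^ p * w y ≤ M ^ p) :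
    (δ / M) ^ (p / (p - 1)) ≤ 1 - w x := by
  set q := p / (p - 1)
  have hpq : p.HolderConjugate q := Real.HolderConjugate.conjExponent hp
  have hw_summable : Summable w := by
    by_contra h
    rw [tsum_eq_zero_of_not_summable h] at hsum
    exact zero_ne_one hsum
  have hwx : w x ≤ 1 := hsum ▸ hw_summable.le_tsum x fun y _ => hw y
  have hmom' : (∑' y : ℤ, |((y - x : ℤ) : ℝ)| ^ p * w y) ^ (1 / p) ≤ M := by
    calc _ ≤ (M ^ p) ^ (1 / p) :=
          Real.rpow_le_rpow (tsum_nonneg fun y => by positivity [hw y]) hmom (by positivity)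
      _ = M := by rw [one_div, Real.rpow_rpow_inv hM.le hpq.ne_zero]
  have hholder : δ ≤ M * (1 - w x) ^ (1 / q) := by
    calc δ ≤ _ := hdrift
      _ ≤ _ := tsum_drift_le_mul_rpow hpq hw hw_summable hforb hmomSummable
      _ ≤ M * (1 - w x) ^ (1 / q) := by
          rw [hsum]
          gcongr
  calc (δ / M) ^ q ≤ ((1 - w x) ^ (1 / q)) ^ q := by
        gcongr
        rwa [div_le_iff₀' hM]
    _ = 1 - w x := by
        rw [← Real.rpow_mul (by linarith), one_div_mul_cancel hpq.symm.ne_zero, Real.rpow_one]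

section PathSpace

variable {α : Type*}

def cyl (m : ℕ) (u : ℕ → α) : Set (ℕ → α) := {f | ∀ k ≤ m, f k = u k}

def shift (m : ℕ) (f : ℕ → α) : ℕ → α := fun k => f (m + k)

def visits (c : α) : Set (ℕ → α) := {f | ∃ n, f n = c}

lemma cyl_inter_cyl {m n : ℕ} {u v f : ℕ → α} (hf : f ∈ cyl m u ∩ cyl n v) :
    cyl m u ∩ cyl n v = cyl (max m n) f := by
  ext g
  simp only [cyl, Set.mem_inter_iff, Set.mem_ofPred_eq] at hf ⊢
  constructor
  · rintro ⟨hu, hv⟩ k hk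
    rcases le_max_iff.mp hk with hk | hk
    · rw [hu k hk, hf.1 k hk]
    · rw [hv k hk, hf.2 k hk]
  · intro hg
    exact ⟨fun k hk => (hg k (le_max_of_le_left hk)).trans (hf.1 k hk),
      fun k hk => (hg k (le_max_of_le_right hk)).trans (hf.2 k hk)⟩

lemma isPiSystem_cyl : IsPiSystem {S : Set (ℕ → α) | ∃ m u, S = cyl m u} := by
  rintro _ ⟨m, u, rfl⟩ _ ⟨n, v, rfl⟩ ⟨f, hf⟩
  exact ⟨max m n, f, cyl_inter_cyl hf⟩

def concatAt (m : ℕ) (u v : ℕ → α) : ℕ → α := fun k => if k ≤ m then u k else v (k - m)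

lemma shift_preimage_cyl_inter_cyl {m n : ℕ} {u v : ℕ → α} (hv : v 0 = u m) :
    shift m ⁻¹' cyl n v ∩ cyl m u = cyl (m + n) (concatAt m u v) := by
  ext f
  simp only [cyl, shift, concatAt, Set.mem_inter_iff, Set.mem_preimage, Set.mem_ofPred_eq]
  constructor
  · rintro ⟨hfv, hfu⟩ k hk
    split_ifs with hkm
    · exact hfu k hkm
    · simpa [Nat.add_sub_cancel' (not_le.1 hkm).le] using hfv (k - m) (by omega)
  · intro hf
    refine ⟨fun k hk => ?_, fun k hk => by simpa [hk] using hf k (by omega)⟩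
    rcases Nat.eq_zero_or_pos k with rfl | hk0
    · simpa [hv] using hf m (by omega)
    · simpa [show ¬ m + k ≤ m by omega] using hf (m + k) (by omega)

lemma prod_range_concatAt {β : Type*} [CommMonoid β] (π : α → α → β) {m n : ℕ}
    {u v : ℕ → α} (hv : v 0 = u m) :
    ∏ k ∈ Finset.range (m + n), π (concatAt m u v k) (concatAt m u v (k + 1)) =
      (∏ k ∈ Finset.range m, π (u k) (u (k + 1))) * ∏ k ∈ Finset.range n, π (v k) (v (k + 1)) := by
  rw [Finset.prod_range_add]
  congr 1
  · refine Finset.prod_congr rfl fun k hk => ?_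
    have hk : k < m := Finset.mem_range.1 hk
    simp [concatAt, hk.le, Nat.succ_le_of_lt hk]
  · refine Finset.prod_congr rfl fun k _ => ?_
    rcases Nat.eq_zero_or_pos k with rfl | hk0
    · simp [concatAt, hv]
    · simp [concatAt, show ¬ m + k ≤ m by omega, show ¬ m + k + 1 ≤ m by omega,
        show m + k + 1 - m = k + 1 by omega]

lemma mem_visits_iff_shift [PartialOrder α] {f : ℕ → α} (hf : Monotone f) {m : ℕ} {c : α}
    (hc : f m ≤ c) (hfirst : ∀ k < m, f k ≠ f m) : f ∈ visits c ↔ shift m f ∈ visits c := by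
  constructor
  · rintro ⟨k, hk⟩
    rcases lt_or_ge k m with hkm | hkm
    · exact absurd (le_antisymm (hf hkm.le) (hk ▸ hc)) (hfirst k hkm)
    · exact ⟨k - m, by simp [shift, Nat.add_sub_cancel' hkm, hk]⟩
  · rintro ⟨k, hk⟩
    exact ⟨m + k, hk⟩

-- Finite paths `u 0, …, u m`: a countable family indexing all cylinders.
abbrev Prefix (α : Type*) := Σ m : ℕ, Fin (m + 1) → α

namespace Prefix

def toPath (s : Prefix α) : ℕ → α := fun k => s.2 ⟨min k s.1, by omega⟩

def ofPath (f : ℕ → α) (m : ℕ) : Prefix α := ⟨m, fun j => f j⟩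

lemma toPath_ofPath {f : ℕ → α} {m k : ℕ} (hk : k ≤ m) : (ofPath f m).toPath k = f k := by
  simp [toPath, ofPath, min_eq_left hk]

lemma mem_cyl_ofPath (f : ℕ → α) (m : ℕ) : f ∈ cyl m (ofPath f m).toPath :=
  fun _ hk => (toPath_ofPath hk).symm

lemma eq_ofPath {s : Prefix α} {f : ℕ → α} (hf : f ∈ cyl s.1 s.toPath) : s = ofPath f s.1 := by
  obtain ⟨m, u⟩ := s
  refine Sigma.ext rfl (heq_of_eq (funext fun j => ?_))
  have := hf j (Nat.lt_succ_iff.1 j.2)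
  simp only [toPath, min_eq_left (Nat.lt_succ_iff.1 j.2)] at this
  exact this.symm

end Prefix

section Measurability

variable [MeasurableSpace α]

lemma measurable_shift (m : ℕ) : Measurable (shift m : (ℕ → α) → ℕ → α) :=
  measurable_pi_lambda _ fun k => measurable_pi_apply (m + k)

variable [MeasurableSingletonClass α]

lemma measurableSet_cyl (m : ℕ) (u : ℕ → α) : MeasurableSet (cyl m u) := by
  simp only [cyl, Set.ofPred_forall]
  exact MeasurableSet.iInter fun k => MeasurableSet.iInter fun _ =>
    (measurableSet_singleton (u k)).preimage (measurable_pi_apply k)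

lemma measurableSet_visits (c : α) : MeasurableSet (visits c) := by
  simp only [visits, Set.ofPred_exists]
  exact MeasurableSet.iUnion fun n => (measurableSet_singleton c).preimage (measurable_pi_apply n)

lemma generateFrom_cyl [Countable α] :
    MeasurableSpace.generateFrom {S : Set (ℕ → α) | ∃ m u, S = cyl m u} = MeasurableSpace.pi := by
  refine le_antisymm (MeasurableSpace.generateFrom_le ?_) (iSup_le fun k => ?_)
  · rintro _ ⟨m, u, rfl⟩
    exact measurableSet_cyl m u
  rw [← measurable_iff_comap_le]
  refine @measurable_to_countable' _ _ _ _ (MeasurableSpace.generateFrom _) _ fun a => ?_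
  have hcover : (fun f : ℕ → α => f k) ⁻¹' {a} =
      ⋃ s : {s : Prefix α // s.1 = k ∧ s.toPath k = a}, cyl s.1.1 s.1.toPath := by
    ext f
    simp only [Set.mem_preimage, Set.mem_singleton_iff, Set.mem_iUnion]
    constructor
    · rintro rfl
      exact ⟨⟨Prefix.ofPath f k, rfl, Prefix.toPath_ofPath le_rfl⟩, Prefix.mem_cyl_ofPath f k⟩
    · rintro ⟨⟨s, rfl, hs⟩, hf⟩
      exact (hf _ le_rfl).trans hs
  rw [hcover]
  exact MeasurableSet.iUnion fun s =>
    MeasurableSpace.measurableSet_generateFrom ⟨s.1.1, s.1.toPath, rfl⟩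

end Measurability

structure IsMarkovChainLaw [MeasurableSpace α] (π : α → α → ℝ) (P : α → Measure (ℕ → α)) :
    Prop where
  isProbabilityMeasure (x : α) : IsProbabilityMeasure (P x)
  measure_cyl (u : ℕ → α) (n : ℕ) :
    P (u 0) (cyl n u) = ENNReal.ofReal (∏ k ∈ Finset.range n, π (u k) (u (k + 1)))

namespace IsMarkovChainLaw

variable [MeasurableSpace α] [MeasurableSingletonClass α] {π : α → α → ℝ}
  {P : α → Measure (ℕ → α)}

lemma ae_start (hP : IsMarkovChainLaw π P) (x : α) : ∀ᵐ f ∂P x, f 0 = x := by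
  have := hP.isProbabilityMeasure x
  have hcyl : cyl 0 (fun _ => x) = {f : ℕ → α | f 0 = x} := by
    ext f
    simp [cyl]
  have h := hP.measure_cyl (fun _ => x) 0
  rw [hcyl, Finset.prod_range_zero, ENNReal.ofReal_one] at h
  rw [ae_iff, ← Set.compl_ofPred, prob_compl_eq_zero_iff (hcyl ▸ measurableSet_cyl 0 _)]
  exact h

lemma measure_cyl_of_ne (hP : IsMarkovChainLaw π P) {x : α} {n : ℕ} {u : ℕ → α} (h : u 0 ≠ x) :
    P x (cyl n u) = 0 :=
  measure_mono_null (fun _ hf hf0 => h ((hf 0 (Nat.zero_le n)).symm.trans hf0))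
    (ae_iff.1 (hP.ae_start x))

lemma measure_shift_preimage_cyl_inter_cyl (hP : IsMarkovChainLaw π P) (hπ : ∀ x y, 0 ≤ π x y)
    (m n : ℕ) (u v : ℕ → α) :
    P (u 0) (shift m ⁻¹' cyl n v ∩ cyl m u) = P (u 0) (cyl m u) * P (u m) (cyl n v) := by
  by_cases hv : v 0 = u m
  · have h := hP.measure_cyl (concatAt m u v) (m + n)
    rw [show concatAt m u v 0 = u 0 by simp [concatAt], prod_range_concatAt π hv,
      ENNReal.ofReal_mul (Finset.prod_nonneg fun _ _ => hπ _ _)] at h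
    rw [shift_preimage_cyl_inter_cyl hv, h, hP.measure_cyl u, ← hP.measure_cyl v, hv]
  · have hempty : shift m ⁻¹' cyl n v ∩ cyl m u = ∅ :=
      Set.eq_empty_of_forall_notMem fun f ⟨hfv, hfu⟩ =>
        hv ((hfv 0 (Nat.zero_le n)).symm.trans (hfu m le_rfl))
    rw [hempty, hP.measure_cyl_of_ne hv, measure_empty, mul_zero]

theorem measure_shift_preimage_inter_cyl [Countable α] (hP : IsMarkovChainLaw π P)
    (hπ : ∀ x y, 0 ≤ π x y) (m : ℕ) (u : ℕ → α) {A : Set (ℕ → α)} (hA : MeasurableSet A) :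
    P (u 0) (shift m ⁻¹' A ∩ cyl m u) = P (u 0) (cyl m u) * P (u m) A := by
  have := hP.isProbabilityMeasure (u 0)
  have := hP.isProbabilityMeasure (u m)
  have hmap : ∀ {B}, MeasurableSet B →
      ((P (u 0)).restrict (cyl m u)).map (shift m) B = P (u 0) (shift m ⁻¹' B ∩ cyl m u) :=
    fun hB => by
      rw [Measure.map_apply (measurable_shift m) hB, Measure.restrict_apply (measurable_shift m hB)]
  suffices h : ((P (u 0)).restrict (cyl m u)).map (shift m) = P (u 0) (cyl m u) • P (u m) by
    rw [← hmap hA, h, Measure.smul_apply, smul_eq_mul]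
  refine ext_of_generate_finite _ generateFrom_cyl.symm isPiSystem_cyl ?_ ?_
  · rintro _ ⟨n, v, rfl⟩
    rw [hmap (measurableSet_cyl n v), Measure.smul_apply, smul_eq_mul]
    exact hP.measure_shift_preimage_cyl_inter_cyl hπ m n u v
  · rw [hmap MeasurableSet.univ, Set.preimage_univ, Set.univ_inter, Measure.smul_apply,
      measure_univ, smul_eq_mul, mul_one]

lemma ae_monotone [Countable α] [LinearOrder α] (hP : IsMarkovChainLaw π P)
    (hforb : ∀ x y, y < x → π x y = 0) (x : α) : ∀ᵐ f ∂P x, Monotone f := by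
  have hstep : ∀ n, ∀ᵐ f ∂P x, f n ≤ f (n + 1) := by
    intro n
    have hcover : {f : ℕ → α | ¬ f n ≤ f (n + 1)} ⊆
        ⋃ s : {s : Prefix α // s.1 = n + 1 ∧ s.toPath (n + 1) < s.toPath n},
          cyl s.1.1 s.1.toPath := fun f hf =>
      Set.mem_iUnion.2 ⟨⟨Prefix.ofPath f (n + 1), rfl, by
        rwa [Prefix.toPath_ofPath le_rfl, Prefix.toPath_ofPath (Nat.le_succ n), ← not_le]⟩,
        Prefix.mem_cyl_ofPath f (n + 1)⟩
    refine ae_iff.2 (measure_mono_null hcover (measure_iUnion_null fun ⟨s, hlen, hs⟩ => ?_))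
    by_cases h0 : s.toPath 0 = x
    · rw [← h0, hP.measure_cyl, hlen,
        Finset.prod_eq_zero (Finset.self_mem_range_succ n) (hforb _ _ hs), ENNReal.ofReal_zero]
    · exact hP.measure_cyl_of_ne h0
  filter_upwards [ae_all_iff.2 hstep] with f hf using monotone_nat_of_le_succ hf

-- The strong Markov property at the first visit to `u m`: monotone paths cannot visit `c` earlier.
lemma measure_visits_inter_cyl [Countable α] [LinearOrder α] (hP : IsMarkovChainLaw π P)
    (hπ : ∀ x y, 0 ≤ π x y) (hforb : ∀ x y, y < x → π x y = 0) {m : ℕ} {u : ℕ → α} {c : α}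
    (hc : u m ≤ c) (hfirst : ∀ k < m, u k ≠ u m) :
    P (u 0) (visits c ∩ cyl m u) = P (u 0) (cyl m u) * P (u m) (visits c) := by
  rw [← hP.measure_shift_preimage_inter_cyl hπ m u (measurableSet_visits c)]
  refine measure_congr (Filter.eventuallyEq_set.2 ?_)
  filter_upwards [hP.ae_monotone hforb (u 0)] with f hf
  simp only [Set.mem_inter_iff, Set.mem_preimage]
  refine and_congr_left fun hfu => mem_visits_iff_shift hf (by rwa [hfu m le_rfl]) fun k hk => ?_
  rw [hfu k hk.le, hfu m le_rfl]
  exact hfirst k hk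

end IsMarkovChainLaw

lemma eq_of_forall_lt_ne {f : ℕ → α} {m m' : ℕ} (hm : ∀ k < m, f k ≠ f m)
    (hm' : ∀ k < m', f k ≠ f m') (h : f m = f m') : m = m' := by
  rcases lt_trichotomy m m' with hlt | heq | hlt
  · exact absurd h (hm' m hlt)
  · exact heq
  · exact absurd h.symm (hm m' hlt)

section FirstMeeting

variable [LinearOrder α]

def meetsBelow (i : α) : Set ((ℕ → α) × (ℕ → α)) :=
  {fg | ∃ ℓ : α, ℓ ≤ i ∧ (∃ m, fg.1 m = ℓ) ∧ (∃ n, fg.2 n = ℓ)}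

-- Only `f 0, …, f m` and `g 0, …, g n` enter, so the pairs of paths first meeting at times `m`
-- and `n` form a union of products of cylinders.
structure IsFirstMeeting (i : α) (f g : ℕ → α) (m n : ℕ) : Prop where
  eq : f m = g n
  le : f m ≤ i
  first_fst : ∀ k < m, f k ≠ f m
  first_snd : ∀ k < n, g k ≠ g n
  le_of_eq : ∀ j ≤ m, ∀ k ≤ n, f j = g k → f m ≤ f j

variable {i : α} {f g f' g' : ℕ → α} {m n m' n' : ℕ}

lemma IsFirstMeeting.congr (h : IsFirstMeeting i f g m n) (hf : ∀ k ≤ m, f k = f' k)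
    (hg : ∀ k ≤ n, g k = g' k) : IsFirstMeeting i f' g' m n where
  eq := by rw [← hf m le_rfl, ← hg n le_rfl]; exact h.eq
  le := by rw [← hf m le_rfl]; exact h.le
  first_fst k hk := by rw [← hf k hk.le, ← hf m le_rfl]; exact h.first_fst k hk
  first_snd k hk := by rw [← hg k hk.le, ← hg n le_rfl]; exact h.first_snd k hk
  le_of_eq j hj k hk hjk := by
    rw [← hf j hj, ← hf m le_rfl]
    exact h.le_of_eq j hj k hk (by rw [hf j hj, hg k hk, hjk])

lemma IsFirstMeeting.mem_meetsBelow (h : IsFirstMeeting i f g m n) : (f, g) ∈ meetsBelow i :=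
  ⟨f m, h.le, ⟨m, rfl⟩, ⟨n, h.eq.symm⟩⟩

lemma exists_isFirstMeeting (hf : Monotone f) (h : (f, g) ∈ meetsBelow i) :
    ∃ m n, IsFirstMeeting i f g m n := by
  classical
  obtain ⟨_, hℓ, ⟨a, rfl⟩, ⟨b, hb⟩⟩ := h
  -- Along a monotone path the first time at a common point `≤ i` gives the least such point.
  have hex : ∃ m, f m ≤ i ∧ ∃ n, g n = f m := ⟨a, hℓ, b, hb⟩
  set m := Nat.find hex
  obtain ⟨hm, hgm⟩ := Nat.find_spec hex
  refine ⟨m, Nat.find hgm, (Nat.find_spec hgm).symm, hm, fun k hk hkm => ?_, fun k hk => ?_, ?_⟩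
  · exact Nat.find_min hex hk ⟨hkm ▸ hm, Nat.find hgm, (Nat.find_spec hgm).trans hkm.symm⟩
  · rw [Nat.find_spec hgm]
    exact Nat.find_min hgm hk
  · intro j hj k _ hjk
    exact hf (Nat.find_min' hex ⟨(hf hj).trans hm, k, hjk.symm⟩)

lemma IsFirstMeeting.le_of_isFirstMeeting (hf : Monotone f) (hg : Monotone g)
    (h : IsFirstMeeting i f g m n) (h' : IsFirstMeeting i f g m' n') : f m ≤ f m' := by
  refine le_of_not_gt fun hlt => ?_
  have hm : m' ≤ m := (hf.reflect_lt hlt).le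
  have hn : n' ≤ n := (hg.reflect_lt (by rwa [← h.eq, ← h'.eq])).le
  exact absurd (h.le_of_eq m' hm n' hn h'.eq) (not_le.2 hlt)

lemma IsFirstMeeting.unique (hf : Monotone f) (hg : Monotone g) (h : IsFirstMeeting i f g m n)
    (h' : IsFirstMeeting i f g m' n') : m = m' ∧ n = n' := by
  have hfm : f m = f m' :=
    le_antisymm (h.le_of_isFirstMeeting hf hg h') (h'.le_of_isFirstMeeting hf hg h)
  exact ⟨eq_of_forall_lt_ne h.first_fst h'.first_fst hfm,
    eq_of_forall_lt_ne h.first_snd h'.first_snd (by rw [← h.eq, ← h'.eq, hfm])⟩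

def IsFirstMeetingPrefixes (x y i : α) (s : Prefix α × Prefix α) : Prop :=
  s.1.toPath 0 = x ∧ s.2.toPath 0 = y ∧ IsFirstMeeting i s.1.toPath s.2.toPath s.1.1 s.2.1

def cylProd (s : Prefix α × Prefix α) : Set ((ℕ → α) × (ℕ → α)) :=
  cyl s.1.1 s.1.toPath ×ˢ cyl s.2.1 s.2.toPath

lemma IsFirstMeetingPrefixes.isFirstMeeting {x y : α} {s : Prefix α × Prefix α}
    (hs : IsFirstMeetingPrefixes x y i s) (hfg : (f, g) ∈ cylProd s) :
    IsFirstMeeting i f g s.1.1 s.2.1 :=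
  hs.2.2.congr (fun k hk => (hfg.1 k hk).symm) (fun k hk => (hfg.2 k hk).symm)

lemma mem_meetsBelow_iff_exists_rect {x y : α} (hf : Monotone f) (hf0 : f 0 = x) (hg0 : g 0 = y) :
    (f, g) ∈ meetsBelow i ↔ ∃ s : {s // IsFirstMeetingPrefixes x y i s}, (f, g) ∈ cylProd s.1 := by
  constructor
  · intro h
    obtain ⟨m, n, hmn⟩ := exists_isFirstMeeting hf h
    refine ⟨⟨(Prefix.ofPath f m, Prefix.ofPath g n), ?_, ?_, ?_⟩,
      Prefix.mem_cyl_ofPath f m, Prefix.mem_cyl_ofPath g n⟩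
    · rw [Prefix.toPath_ofPath (Nat.zero_le m), hf0]
    · rw [Prefix.toPath_ofPath (Nat.zero_le n), hg0]
    · exact hmn.congr (fun k hk => (Prefix.toPath_ofPath hk).symm)
        (fun k hk => (Prefix.toPath_ofPath hk).symm)
  · rintro ⟨⟨s, hs⟩, hfg⟩
    exact (hs.isFirstMeeting hfg).mem_meetsBelow

lemma IsFirstMeetingPrefixes.eq {x y : α} {s t : Prefix α × Prefix α} (hf : Monotone f)
    (hg : Monotone g) (hs : IsFirstMeetingPrefixes x y i s) (ht : IsFirstMeetingPrefixes x y i t)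
    (hfgs : (f, g) ∈ cylProd s) (hfgt : (f, g) ∈ cylProd t) : s = t := by
  obtain ⟨hm, hn⟩ := (hs.isFirstMeeting hfgs).unique hf hg (ht.isFirstMeeting hfgt)
  refine Prod.ext ?_ ?_
  · rw [Prefix.eq_ofPath hfgs.1, Prefix.eq_ofPath hfgt.1, hm]
  · rw [Prefix.eq_ofPath hfgs.2, Prefix.eq_ofPath hfgt.2, hn]

end FirstMeeting

lemma measurableSet_meetsBelow [MeasurableSpace α] [MeasurableSingletonClass α] [Countable α]
    [LinearOrder α] (i : α) : MeasurableSet (meetsBelow i) := by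
  have h : meetsBelow i = ⋃ ℓ : α, ⋃ (_ : ℓ ≤ i), visits ℓ ×ˢ visits ℓ := by
    ext fg
    simp [meetsBelow, visits]
  rw [h]
  exact .iUnion fun ℓ => .iUnion fun _ => (measurableSet_visits ℓ).prod (measurableSet_visits ℓ)

lemma measure_inter_eq_tsum_of_ae_partition {β ι : Type*} [MeasurableSpace β] [Countable ι]
    {μ : Measure β} {X B : Set β} {R : ι → Set β} (hX : MeasurableSet X)
    (hR : ∀ s, MeasurableSet (R s)) (hcover : ∀ᵐ z ∂μ, z ∈ B ↔ ∃ s, z ∈ R s)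
    (hdisj : ∀ᵐ z ∂μ, ∀ s t, z ∈ R s → z ∈ R t → s = t) :
    μ (X ∩ B) = ∑' s, μ (X ∩ R s) := by
  calc μ (X ∩ B) = μ (⋃ s, X ∩ R s) := by
        refine measure_congr (Filter.eventuallyEq_set.2 (hcover.mono fun z hz => ?_))
        simp only [Set.mem_inter_iff, Set.mem_iUnion, hz, exists_and_left]
    _ = ∑' s, μ (X ∩ R s) :=
        measure_iUnion₀ (fun s t hst => measure_mono_null
          (fun z (hz : z ∈ (X ∩ R s) ∩ (X ∩ R t)) (h : ∀ s t, z ∈ R s → z ∈ R t → s = t) =>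
            hst (h s t hz.1.2 hz.2.2))
          (ae_iff.1 hdisj)) fun s => (hX.inter (hR s)).nullMeasurableSet

lemma abs_measureReal_sub_le_of_inter_eq {β : Type*} [MeasurableSpace β] {μ : Measure β}
    [IsFiniteMeasure μ] {S T B : Set β} (hB : MeasurableSet B) (h : μ (S ∩ B) = μ (T ∩ B)) :
    |μ.real S - μ.real T| ≤ μ.real Bᶜ := by
  have hS := measureReal_inter_add_sdiff (s := S) hB (μ := μ)
  have hT := measureReal_inter_add_sdiff (s := T) hB (μ := μ)
  have hST : μ.real (S ∩ B) = μ.real (T ∩ B) := congrArg ENNReal.toReal h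
  have hS' : μ.real (S \ B) ≤ μ.real Bᶜ := measureReal_mono fun _ hz => hz.2
  have hT' : μ.real (T \ B) ≤ μ.real Bᶜ := measureReal_mono fun _ hz => hz.2
  rw [abs_sub_le_iff]
  constructor <;> linarith [measureReal_nonneg (μ := μ) (s := S \ B),
    measureReal_nonneg (μ := μ) (s := T \ B)]

namespace IsMarkovChainLaw

variable [MeasurableSpace α] [MeasurableSingletonClass α] [Countable α] [LinearOrder α]
  {π : α → α → ℝ} {P : α → Measure (ℕ → α)}

lemma measure_prod_inter_rect (hP : IsMarkovChainLaw π P) (hπ : ∀ x y, 0 ≤ π x y)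
    (hforb : ∀ x y, y < x → π x y = 0) {x y i : α} {s : Prefix α × Prefix α}
    (hs : IsFirstMeetingPrefixes x y i s) :
    (P x).prod (P y) ((visits i ×ˢ Set.univ) ∩ cylProd s) =
      (P x).prod (P y) ((Set.univ ×ˢ visits i) ∩ cylProd s) := by
  have := hP.isProbabilityMeasure y
  obtain ⟨hx, hy, h⟩ := hs
  rw [cylProd, Set.prod_inter_prod, Set.prod_inter_prod, Set.univ_inter, Set.univ_inter,
    Measure.prod_prod, Measure.prod_prod, ← hx, ← hy,
    hP.measure_visits_inter_cyl hπ hforb h.le h.first_fst,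
    hP.measure_visits_inter_cyl hπ hforb (h.eq ▸ h.le) h.first_snd, h.eq]
  ring

theorem measure_visits_fst_inter_meetsBelow (hP : IsMarkovChainLaw π P) (hπ : ∀ x y, 0 ≤ π x y)
    (hforb : ∀ x y, y < x → π x y = 0) (x y i : α) :
    (P x).prod (P y) ((visits i ×ˢ Set.univ) ∩ meetsBelow i) =
      (P x).prod (P y) ((Set.univ ×ˢ visits i) ∩ meetsBelow i) := by
  have := hP.isProbabilityMeasure x
  have := hP.isProbabilityMeasure y
  have hae : ∀ᵐ z ∂(P x).prod (P y), (Monotone z.1 ∧ z.1 0 = x) ∧ (Monotone z.2 ∧ z.2 0 = y) :=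
    (Measure.quasiMeasurePreserving_fst.ae ((hP.ae_monotone hforb x).and (hP.ae_start x))).and
      (Measure.quasiMeasurePreserving_snd.ae ((hP.ae_monotone hforb y).and (hP.ae_start y)))
  have hcover := hae.mono fun z ⟨⟨hf, hf0⟩, _, hg0⟩ =>
    mem_meetsBelow_iff_exists_rect (i := i) (g := z.2) hf hf0 hg0
  have hdisj : ∀ᵐ z ∂(P x).prod (P y), ∀ s t : {s // IsFirstMeetingPrefixes x y i s},
      z ∈ cylProd s.1 → z ∈ cylProd t.1 → s = t :=
    hae.mono fun z ⟨⟨hf, _⟩, hg, _⟩ s t hzs hzt => Subtype.ext (s.2.eq hf hg t.2 hzs hzt)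
  have hrect : ∀ s : {s // IsFirstMeetingPrefixes x y i s}, MeasurableSet (cylProd s.1) :=
    fun s => (measurableSet_cyl _ _).prod (measurableSet_cyl _ _)
  rw [measure_inter_eq_tsum_of_ae_partition ((measurableSet_visits i).prod .univ) hrect hcover
      hdisj,
    measure_inter_eq_tsum_of_ae_partition (MeasurableSet.univ.prod (measurableSet_visits i)) hrect
      hcover hdisj]
  exact tsum_congr fun s => hP.measure_prod_inter_rect hπ hforb s.2

end IsMarkovChainLaw

end PathSpace

end AsymmetricWalk

open AsymmetricWalk in
theorem stmt_18_general
    (π : ℤ → ℤ → ℝ) (δ M p : ℝ) (hδ : 0 < δ) (hM : 0 < M) (hp : 1 < p)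
    (hnn : ∀ x y, 0 ≤ π x y) (hrow : ∀ x, ∑' y, π x y = 1)
    (hforb : ∀ x y : ℤ, y < x → π x y = 0)
    (hdrift : ∀ x : ℤ, δ ≤ ∑' y : ℤ, ((y - x : ℤ) : ℝ) * π x y)
    (hmomSummable : ∀ x, Summable (fun y : ℤ => |((y - x : ℤ) : ℝ)| ^ p * π x y))
    (hmom : ∀ x : ℤ, ∑' y : ℤ, |((y - x : ℤ) : ℝ)| ^ p * π x y ≤ M ^ p)
    (P : ℤ → Measure (ℕ → ℤ)) (hPprob : ∀ x, IsProbabilityMeasure (P x))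
    (hcyl : ∀ (x : ℤ) (n : ℕ) (g : ℕ → ℤ), g 0 = x →
      P x {f | ∀ k ≤ n, f k = g k}
        = ENNReal.ofReal (∏ k ∈ Finset.range n, π (g k) (g (k + 1))))
    (i : ℕ) (a : ℝ)
    (ha : a = (1 - π i i)⁻¹ *
      ((P 0 {f | ∃ n, f n = (i : ℤ)}).toReal - (P 1 {f | ∃ n, f n = (i : ℤ)}).toReal)) :
    |a| ≤ (M / δ) ^ (p / (p - 1)) *
      (((P 0).prod (P 1))
        {fg | ¬ ∃ ℓ : ℤ, ℓ ≤ (i : ℤ) ∧ (∃ m, fg.1 m = ℓ) ∧ (∃ n, fg.2 n = ℓ)}).toReal := by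
  have hP : IsMarkovChainLaw π P := ⟨hPprob, fun u n => hcyl (u 0) n u rfl⟩
  have := hPprob 0
  have := hPprob 1
  have hdiag : (δ / M) ^ (p / (p - 1)) ≤ 1 - π i i :=
    rpow_le_one_sub_of_drift_of_moment hδ.le hM hp (hnn i) (hrow i) (hforb i) (hdrift i)
      (hmomSummable i) (hmom i)
  have hcoef : |(1 - π i i)⁻¹| ≤ (M / δ) ^ (p / (p - 1)) := by
    have hpos : 0 < (δ / M) ^ (p / (p - 1)) := by positivity
    rw [abs_of_pos (inv_pos.2 (hpos.trans_le hdiag)), ← inv_div, Real.inv_rpow (by positivity)]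
    exact inv_anti₀ hpos hdiag
  have hcoupling := abs_measureReal_sub_le_of_inter_eq (measurableSet_meetsBelow (i : ℤ))
    (hP.measure_visits_fst_inter_meetsBelow hnn hforb 0 1 i)
  rw [measureReal_prod_prod, measureReal_prod_prod, probReal_univ, probReal_univ, mul_one,
    one_mul] at hcoupling
  rw [ha, abs_mul]
  exact mul_le_mul hcoef hcoupling (abs_nonneg _) (by positivity)

/-- in the one-dimensional totally asymmetric quenched walk
(kernel `π` on `ℤ`, forbidden direction `-1`, non-nestling drift `≥ δ`,
`p`-th moment `≤ M^p`), the coefficient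
`a_i = (1-π_{ii})⁻¹ (P₀^ω(V_i) - P₁^ω(V_i))` satisfies
`|a_i| ≤ (M/δ)^{p/(p-1)} P_{0,1}^ω(L > i)`, where `L` is the first common
point of two independent walks in the same environment started at `0` and `1`
(so `{L > i}` is the event that there is no common point `≤ i`). -/
theorem stmt_18
    (π : ℤ → ℤ → ℝ) (δ M p : ℝ) (hδ : 0 < δ) (hM : 0 < M) (hp : 1 < p)
    (hnn : ∀ x y, 0 ≤ π x y) (hrow : ∀ x, ∑' y, π x y = 1)
    (hforb : ∀ x y : ℤ, y < x → π x y = 0)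
    (hdriftSummable : ∀ x, Summable (fun y : ℤ => ((y - x : ℤ) : ℝ) * π x y))
    (hdrift : ∀ x : ℤ, δ ≤ ∑' y : ℤ, ((y - x : ℤ) : ℝ) * π x y)
    (hmomSummable : ∀ x, Summable (fun y : ℤ => |((y - x : ℤ) : ℝ)| ^ p * π x y))
    (hmom : ∀ x : ℤ, ∑' y : ℤ, |((y - x : ℤ) : ℝ)| ^ p * π x y ≤ M ^ p)
    (P : ℤ → Measure (ℕ → ℤ)) (hPprob : ∀ x, IsProbabilityMeasure (P x))
    (hstart : ∀ x, P x {f | f 0 = x} = 1)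
    (hcyl : ∀ (x : ℤ) (n : ℕ) (g : ℕ → ℤ), g 0 = x →
      P x {f | ∀ k ≤ n, f k = g k}
        = ENNReal.ofReal (∏ k ∈ Finset.range n, π (g k) (g (k + 1))))
    (i : ℕ) (a : ℝ)
    (ha : a = (1 - π i i)⁻¹ *
      ((P 0 {f | ∃ n, f n = (i : ℤ)}).toReal - (P 1 {f | ∃ n, f n = (i : ℤ)}).toReal)) :
    |a| ≤ (M / δ) ^ (p / (p - 1)) *
      (((P 0).prod (P 1))
        {fg | ¬ ∃ ℓ : ℤ, ℓ ≤ (i : ℤ) ∧ (∃ m, fg.1 m = ℓ) ∧ (∃ n, fg.2 n = ℓ)}).toReal :=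
  stmt_18_general π δ M p hδ hM hp hnn hrow hforb hdrift hmomSummable hmom P hPprob hcyl i a ha
end
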